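/- Let S be a coconvex set in R⁺ containing the inversion set I(y) of a Weyl group element y, and let α ∈ I(y). Then the inversion set I(r_α y) of the element r_α y is contained in the Peterson translate τ(S, α), where r_α is the reflection through α. -/

import Mathlib

open scoped RealInnerProductSpace

variable {V : Type*} [NormedAddCommGroup V] [InnerProductSpace ℝ V]

/-- A finite crystallographic root system with a choice of positive and simple roots. -/
structure RootSystemData (V : Type*) [NormedAddCommGroup V] [InnerProductSpace ℝ V] where
  roots : Set V
  pos : Set V
  simple : Set V
  finite : roots.Finite
  zero_not_mem : (0 : V) ∉ roots
  neg_mem : ∀ α ∈ roots, -α ∈ roots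
  crystallographic : ∀ α ∈ roots, ∀ β ∈ roots, ∃ n : ℤ, 2 * ⟪α, β⟫ = (n : ℝ) * ⟪α, α⟫
  reflect_mem : ∀ α ∈ roots, ∀ β ∈ roots, β - (2 * ⟪α, β⟫ / ⟪α, α⟫) • α ∈ roots
  pos_subset : pos ⊆ roots
  pos_total : ∀ α ∈ roots, α ∈ pos ∨ -α ∈ pos
  pos_not_both : ∀ α ∈ pos, -α ∉ pos
  pos_add : ∀ α ∈ pos, ∀ β ∈ pos, α + β ∈ roots → α + β ∈ pos
  simple_subset : simple ⊆ pos
  simple_indep : LinearIndependent ℝ (fun s : simple => (s : V))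
  pos_nat_comb : ∀ α ∈ pos, ∃ c : V →₀ ℕ, ↑c.support ⊆ simple ∧
    α = c.sum fun v n => (n : ℝ) • v

/-- `S` is closed under sums that lie in `P` ("convex"). -/
def IsSumClosed (P S : Set V) : Prop :=
  ∀ ⦃a b : V⦄, a ∈ S → b ∈ S → a + b ∈ P → a + b ∈ S

/-- `S ⊆ P` is coconvex if its complement in `P` is convex. -/
def IsCoconvex (P S : Set V) : Prop :=
  S ⊆ P ∧ IsSumClosed P (P \ S)

/-- `S ⊆ P` is biconvex if both it and its complement in `P` are convex. -/
def IsBiconvex (P S : Set V) : Prop :=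
  S ⊆ P ∧ IsSumClosed P S ∧ IsSumClosed P (P \ S)

/-- `γ` and `δ` lie in the same `α`-string of `P`: they differ by an integer multiple
of `α` and all intermediate points lie in `P`. -/
def SameString (P : Set V) (α γ δ : V) : Prop :=
  γ ∈ P ∧ δ ∈ P ∧ ∃ k : ℤ, δ = γ + k • α ∧
    ∀ j : ℤ, min 0 k ≤ j → j ≤ max 0 k → γ + j • α ∈ P

/-- The Peterson translate `τ(S, α)` of `S ⊆ P` along `α`: on each `α`-string of `P`,
the `r` elements of `S` are replaced by the bottom `r` elements of the string. -/
def PetersonTranslate (P S : Set V) (α : V) : Set V :=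
  {x | ∃ δ : V, δ ∈ P ∧ δ - α ∉ P ∧ ∃ k : ℕ, x = δ + (k : ℤ) • α ∧
        k < (S ∩ {γ | SameString P α δ γ}).ncard}

/-- Dominance order: `α ⪯ β` iff `β - α` is a non-negative combination of simple roots `Δ`. -/
def Dominates (Delta : Set V) (α β : V) : Prop :=
  ∃ c : V →₀ ℝ, ↑c.support ⊆ Delta ∧ (∀ v, 0 ≤ c v) ∧ β - α = c.sum fun v r => r • v

/-- A lower order ideal of the positive roots in dominance order. -/
def IsLowerOrderIdeal (pos Delta S : Set V) : Prop :=
  S ⊆ pos ∧ ∀ β ∈ S, ∀ α ∈ pos, Dominates Delta α β → α ∈ S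

/-- The reflection through the hyperplane orthogonal to `α` (the identity if `α = 0`). -/
noncomputable def reflLin (α : V) : V ≃ₗ[ℝ] V := by
  classical
  exact if h : α = (0 : V) then LinearEquiv.refl ℝ V
  else
    Module.reflection (f := (2 / ⟪α, α⟫) • ((innerSL ℝ α : V →L[ℝ] ℝ) : V →ₗ[ℝ] ℝ)) (x := α)
      (by
        have h0 : ⟪α, α⟫ ≠ 0 := inner_self_ne_zero.mpr h
        simp only [LinearMap.smul_apply, ContinuousLinearMap.coe_coe, innerSL_apply_apply,
          smul_eq_mul]
        field_simp)

/-- The Weyl group of a set of roots, as a group of linear automorphisms. -/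
noncomputable def WeylGroup (R : Set V) : Subgroup (V ≃ₗ[ℝ] V) :=
  Subgroup.closure ((fun α => reflLin α) '' R)

/-- The inversion set `I(w) = {α ∈ R⁺ : w⁻¹ α ∈ R⁻}`. -/
def inversionSet (pos : Set V) (w : V ≃ₗ[ℝ] V) : Set V :=
  {α ∈ pos | -(w.symm α) ∈ pos}


/-!
Write `r_α β = β - m α`. For `i ≥ -m` we have `-y⁻¹(β + i α) = -y⁻¹(r_α β) + (m + i) (-y⁻¹ α)`, a
nonnegative combination of positive roots; since positivity of a root is detected by the linear
height function, every positive root `β + i α` with `i ≥ -m` lies in `I(y) ⊆ S`.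

Let `δ = β - k α` with `k` maximal such that `δ` is a positive root. Root strings are unbroken, so
the `α`-string from `δ` contains `δ, δ + α, …` up to whichever of `β` and `r_α δ = β + (k - m) α`
is higher, and the `k + 1` topmost of these have index `≥ -m`. Hence `S` meets the string in more
than `k` elements, and `β`, the `k`-th element from the bottom, lies in `τ(S, α)`.
-/

open scoped Pointwise

instance InnerProductSpace.isAddTorsionFree : IsAddTorsionFree V := .of_isTorsionFree ℝ V

theorem real_inner_zsmul_right (x y : V) (n : ℤ) : ⟪x, n • y⟫ = n * ⟪x, y⟫ := by
  rw [← Int.cast_smul_eq_zsmul ℝ, real_inner_smul_right]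

theorem int_mul_le_four_of_two_inner_eq {x y : V} (hx : x ≠ 0) (hy : y ≠ 0) {p q : ℤ}
    (hp : 2 * ⟪x, y⟫ = p * ⟪x, x⟫) (hq : 2 * ⟪x, y⟫ = q * ⟪y, y⟫) : p * q ≤ 4 := by
  have hxy : 0 < ⟪x, x⟫ * ⟪y, y⟫ :=
    mul_pos (real_inner_self_pos.mpr hx) (real_inner_self_pos.mpr hy)
  have : ((p * q : ℤ) : ℝ) * (⟪x, x⟫ * ⟪y, y⟫) ≤ 4 * (⟪x, x⟫ * ⟪y, y⟫) :=
    calc ((p * q : ℤ) : ℝ) * (⟪x, x⟫ * ⟪y, y⟫) = 4 * (⟪x, y⟫ * ⟪x, y⟫) := by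
          push_cast
          linear_combination (-(q * ⟪y, y⟫)) * hp - 2 * ⟪x, y⟫ * hq
      _ ≤ 4 * (⟪x, x⟫ * ⟪y, y⟫) := by
          linarith [real_inner_mul_inner_self_le x y]
  exact_mod_cast le_of_mul_le_mul_right this hxy

theorem reflLin_apply {α : V} (hα : α ≠ 0) (x : V) :
    reflLin α x = x - (2 * ⟪α, x⟫ / ⟪α, α⟫) • α := by
  rw [reflLin, dif_neg hα, Module.reflection_apply]
  simp only [LinearMap.smul_apply, ContinuousLinearMap.coe_coe, innerSL_apply_apply, smul_eq_mul]
  ring_nf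

theorem reflLin_symm (α : V) : (reflLin α).symm = reflLin α := by
  by_cases hα : α = 0
  · simp [reflLin, hα]
  · rw [reflLin, dif_neg hα]
    exact Module.reflection_symm _

theorem reflLin_reflLin (α x : V) : reflLin α (reflLin α x) = x := by
  conv_lhs => enter [1]; rw [← reflLin_symm]
  exact LinearEquiv.symm_apply_apply _ x

theorem reflLin_eq_sub_zsmul {α x : V} (hα : α ≠ 0) {m : ℤ} (hm : 2 * ⟪α, x⟫ = m * ⟪α, α⟫) :
    reflLin α x = x - m • α := by
  rw [reflLin_apply hα, hm, mul_div_cancel_right₀ _ (inner_self_ne_zero.mpr hα),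
    Int.cast_smul_eq_zsmul]

theorem Set.Finite.exists_sub_zsmul_mem_sub_not_mem {M : Type*} [AddCommGroup M]
    [IsAddTorsionFree M] {P : Set M} (hP : P.Finite) {α β : M} (hα : α ≠ 0) (hβ : β ∈ P) :
    ∃ k : ℕ, β - (k : ℤ) • α ∈ P ∧ β - (k : ℤ) • α - α ∉ P := by
  have hinj : Function.Injective fun k : ℕ => β - (k : ℤ) • α :=
    (sub_right_injective.comp (smul_left_injective ℤ hα)).comp Nat.cast_injective
  obtain ⟨k, hk, hmax⟩ := Set.exists_max_image {k : ℕ | β - (k : ℤ) • α ∈ P} id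
    (hP.preimage hinj.injOn) ⟨0, by simpa using hβ⟩
  refine ⟨k, hk, fun h => absurd (hmax (k + 1) ?_) (by simp)⟩
  simpa [add_smul, sub_sub] using h

theorem add_zsmul_mem_petersonTranslate {P S : Set V} (hP : P.Finite) {α δ : V} (hα : α ≠ 0)
    (hδα : δ - α ∉ P) {n : ℕ} (hrun : ∀ j : ℤ, 0 ≤ j → j ≤ n → δ + j • α ∈ P)
    {a k : ℕ} (hn : a + k ≤ n) (hS : ∀ j : ℕ, a ≤ j → j ≤ a + k → δ + (j : ℤ) • α ∈ S) :
    δ + (k : ℤ) • α ∈ PetersonTranslate P S α := by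
  have hδ : δ ∈ P := by simpa using hrun 0 le_rfl (Nat.cast_nonneg n)
  have hstring (j : ℕ) (hj : j ≤ n) : SameString P α δ (δ + (j : ℤ) • α) :=
    ⟨hδ, hrun j (by positivity) (by exact_mod_cast hj), j, rfl,
      fun i hi hi' => hrun i (by omega) (by omega)⟩
  have hinj : Function.Injective fun j : ℕ => δ + (j : ℤ) • α :=
    (add_right_injective δ |>.comp (smul_left_injective ℤ hα)).comp Nat.cast_injective
  refine ⟨δ, hδ, hδα, k, rfl, ?_⟩
  calc k < (Set.Icc a (a + k)).ncard := by rw [Set.ncard_Icc_nat]; omega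
    _ ≤ (S ∩ {γ | SameString P α δ γ}).ncard :=
      Set.ncard_le_ncard_of_injOn _
        (fun j ⟨hj, hj'⟩ => ⟨hS j hj hj', hstring j (by omega)⟩) hinj.injOn
        (hP.subset fun γ hγ => hγ.2.2.1)

namespace RootSystemData

variable {RS : RootSystemData V}

theorem ne_zero_of_mem_roots {x : V} (hx : x ∈ RS.roots) : x ≠ 0 :=
  ne_of_mem_of_not_mem hx RS.zero_not_mem

theorem reflLin_mem_roots {α x : V} (hα : α ∈ RS.roots) (hx : x ∈ RS.roots) :
    reflLin α x ∈ RS.roots := by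
  rw [reflLin_apply (ne_zero_of_mem_roots hα)]
  exact RS.reflect_mem α hα x hx

theorem weylGroup_le_stabilizer :
    WeylGroup RS.roots ≤ MulAction.stabilizer (V ≃ₗ[ℝ] V) RS.roots := by
  refine Subgroup.closure_le _ |>.mpr ?_
  rintro _ ⟨α, hα, rfl⟩
  refine MulAction.mem_stabilizer_iff.mpr (Set.Subset.antisymm ?_ fun x hx => ?_)
  · rintro _ ⟨x, hx, rfl⟩
    exact reflLin_mem_roots hα hx
  · exact ⟨reflLin α x, reflLin_mem_roots hα hx, reflLin_reflLin α x⟩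

theorem symm_apply_mem_roots {y : V ≃ₗ[ℝ] V} (hy : y ∈ WeylGroup RS.roots) {x : V}
    (hx : x ∈ RS.roots) : y.symm x ∈ RS.roots := by
  rw [← MulAction.mem_stabilizer_iff.mp (inv_mem (weylGroup_le_stabilizer hy))]
  exact ⟨x, hx, rfl⟩

variable (RS) in
theorem linearIndepOn_simple : LinearIndepOn ℝ id RS.simple := RS.simple_indep

variable (RS) in
noncomputable def height : V →ₗ[ℝ] ℝ :=
  (Module.Basis.extend RS.linearIndepOn_simple).sumCoords

theorem height_of_mem_simple {s : V} (hs : s ∈ RS.simple) : RS.height s = 1 := by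
  have hsb := RS.linearIndepOn_simple.subset_extend (Set.subset_univ _) hs
  rw [height, show s = Module.Basis.extend RS.linearIndepOn_simple ⟨s, hsb⟩ from
    (Module.Basis.extend_apply_self _ ⟨s, hsb⟩).symm, Module.Basis.sumCoords_self_apply]

theorem height_pos {x : V} (hx : x ∈ RS.pos) : 0 < RS.height x := by
  obtain ⟨c, hc, hxc⟩ := RS.pos_nat_comb x hx
  have hne : c.support.Nonempty := by
    rw [Finset.nonempty_iff_ne_empty]
    intro h
    exact RS.zero_not_mem (RS.pos_subset (by simpa [hxc, Finsupp.sum, h] using hx))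
  rw [hxc, Finsupp.sum, map_sum]
  refine Finset.sum_pos (fun v hv => ?_) hne
  rw [map_smul, height_of_mem_simple (hc hv), smul_eq_mul, mul_one]
  exact_mod_cast Nat.pos_of_ne_zero (Finsupp.mem_support_iff.mp hv)

theorem mem_pos_iff_height_pos {x : V} (hx : x ∈ RS.roots) : x ∈ RS.pos ↔ 0 < RS.height x := by
  refine ⟨height_pos, fun h => (RS.pos_total x hx).resolve_right fun hneg => ?_⟩
  have := height_pos hneg
  rw [map_neg] at this
  linarith

theorem height_add_zsmul_pos {u a : V} (hu : u ∈ RS.pos) (ha : a ∈ RS.pos) {n : ℤ}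
    (hn : 0 ≤ n) : 0 < RS.height (u + n • a) := by
  rw [map_add, map_zsmul, zsmul_eq_mul]
  have := height_pos hu
  have := height_pos ha
  positivity

theorem add_zsmul_mem_pos {u a : V} (hu : u ∈ RS.pos) (ha : a ∈ RS.pos) {n : ℤ} (hn : 0 ≤ n)
    (h : u + n • a ∈ RS.roots) : u + n • a ∈ RS.pos :=
  (mem_pos_iff_height_pos h).mpr (height_add_zsmul_pos hu ha hn)

theorem add_zsmul_mem_inversionSet {y : V ≃ₗ[ℝ] V} (hy : y ∈ WeylGroup RS.roots) {α γ : V}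
    (hα : α ∈ inversionSet RS.pos y) (hγ : -(y.symm γ) ∈ RS.pos) {n : ℤ} (hn : 0 ≤ n)
    (h : γ + n • α ∈ RS.pos) : γ + n • α ∈ inversionSet RS.pos y := by
  have e : -(y.symm (γ + n • α)) = -(y.symm γ) + n • -(y.symm α) := by
    rw [map_add, map_zsmul, neg_add, smul_neg]
  refine ⟨h, e ▸ add_zsmul_mem_pos hγ hα.2 hn ?_⟩
  rw [← e]
  exact RS.neg_mem _ (symm_apply_mem_roots hy (RS.pos_subset h))

theorem add_mem_roots_of_inner_neg {α θ : V} (hα : α ∈ RS.roots) (hθ : θ ∈ RS.roots)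
    (h : ⟪α, θ⟫ < 0) (hne : θ + α ≠ 0) : θ + α ∈ RS.roots := by
  have hα0 := ne_zero_of_mem_roots hα
  have hθ0 := ne_zero_of_mem_roots hθ
  obtain ⟨p, hp⟩ := RS.crystallographic α hα θ hθ
  obtain ⟨q, hq⟩ := RS.crystallographic θ hθ α hα
  rw [real_inner_comm] at hq
  have hp0 : p < 0 :=
    Int.cast_lt_zero.mp (neg_of_mul_neg_left (by rw [← hp]; linarith) real_inner_self_nonneg)
  have hq0 : q < 0 :=
    Int.cast_lt_zero.mp (neg_of_mul_neg_left (by rw [← hq]; linarith) real_inner_self_nonneg)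
  have hpq := int_mul_le_four_of_two_inner_eq hα0 hθ0 hp hq
  have hcases : p = -1 ∨ q = -1 ∨ (p = -2 ∧ q = -2) := by
    by_contra! h
    have hp2 : p ≤ -2 := by omega
    have hq2 : q ≤ -2 := by omega
    exact h.2.2 (by nlinarith) (by nlinarith)
  rcases hcases with rfl | rfl | ⟨rfl, rfl⟩
  · have := reflLin_mem_roots hα hθ
    rwa [reflLin_eq_sub_zsmul hα0 hp, neg_one_zsmul, sub_neg_eq_add] at this
  · have := reflLin_mem_roots hθ hα
    rwa [reflLin_eq_sub_zsmul hθ0 (by rw [real_inner_comm]; exact hq), neg_one_zsmul,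
      sub_neg_eq_add, add_comm] at this
  · refine absurd (inner_self_eq_zero (𝕜 := ℝ).mp ?_) hne
    rw [real_inner_add_add_self, real_inner_comm α θ]
    push_cast at hp hq
    linarith

theorem add_zsmul_mem_roots_of_endpoints {α β : V} (hα : α ∈ RS.roots) (hβ : β ∈ RS.roots) {n : ℕ}
    (hn : β + (n : ℤ) • α ∈ RS.roots) (hne : ∀ i : ℤ, 0 ≤ i → i ≤ n → β + i • α ≠ 0) :
    ∀ i : ℤ, 0 ≤ i → i ≤ n → β + i • α ∈ RS.roots := by
  induction n generalizing β with
  | zero =>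
    intro i hi₀ hin
    obtain rfl : i = 0 := by omega
    simpa using hβ
  | succ n ih =>
    intro i hi₀ hin
    by_cases hbot : ⟪α, β⟫ < 0
    · have hβα : β + α ∈ RS.roots :=
        add_mem_roots_of_inner_neg hα hβ hbot (by simpa using hne 1 zero_le_one (by omega))
      rcases hi₀.eq_or_lt with rfl | hi
      · simpa using hβ
      · have := ih hβα (by convert hn using 1; push_cast; module)
          (fun j hj₀ hjn => by convert hne (j + 1) (by omega) (by omega) using 1; module)
          (i - 1) (by omega) (by omega)
        convert this using 1
        module
    by_cases htop : 0 < ⟪α, β + ((n + 1 : ℕ) : ℤ) • α⟫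
    · have hβn : β + (n : ℤ) • α ∈ RS.roots := by
        have := add_mem_roots_of_inner_neg (RS.neg_mem α hα) hn (by rw [inner_neg_left]; linarith)
          (by convert hne n (by omega) (by omega) using 1; push_cast; module)
        convert this using 1
        push_cast
        module
      rcases hin.eq_or_lt with rfl | hi
      · exact hn
      · exact ih hβ hβn (fun j hj₀ hjn => hne j hj₀ (by omega)) i hi₀ (by omega)
    have hαα : 0 < ⟪α, α⟫ := real_inner_self_pos.mpr (ne_zero_of_mem_roots hα)
    rw [inner_add_right, real_inner_zsmul_right] at htop
    push_cast at htop
    nlinarith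

theorem add_zsmul_mem_pos_of_endpoints {α β : V} (hα : α ∈ RS.pos) (hβ : β ∈ RS.pos) {n : ℕ}
    (hn : β + (n : ℤ) • α ∈ RS.roots) : ∀ i : ℤ, 0 ≤ i → i ≤ n → β + i • α ∈ RS.pos := by
  intro i hi₀ hin
  refine add_zsmul_mem_pos hβ hα hi₀ ?_
  refine add_zsmul_mem_roots_of_endpoints (RS.pos_subset hα) (RS.pos_subset hβ) hn
    (fun j hj₀ _ h => (height_add_zsmul_pos hβ hα hj₀).ne' ?_) i hi₀ hin
  rw [h, map_zero]

theorem add_toNat_sub_zsmul_mem_roots {α β : V} (hα : α ∈ RS.roots) (hβ : β ∈ RS.roots) {m : ℤ}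
    (hm : 2 * ⟪α, β⟫ = m * ⟪α, α⟫) {k : ℕ} (hk : β - (k : ℤ) • α ∈ RS.roots) :
    β + (((k : ℤ) - m).toNat : ℤ) • α ∈ RS.roots := by
  rcases le_or_gt (k : ℤ) m with h | h
  · simpa [Int.toNat_of_nonpos (by omega : (k : ℤ) - m ≤ 0)] using hβ
  · have hkm : 2 * ⟪α, β - (k : ℤ) • α⟫ = ((m - 2 * k : ℤ) : ℝ) * ⟪α, α⟫ := by
      rw [inner_sub_right, real_inner_zsmul_right]
      push_cast
      linarith
    have := reflLin_mem_roots hα hk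
    rw [reflLin_eq_sub_zsmul (ne_zero_of_mem_roots hα) hkm] at this
    convert this using 1
    rw [Int.toNat_of_nonneg (by omega)]
    module

end RootSystemData

open RootSystemData in
theorem inversionSet_reflection_subset_petersonTranslate_general
    (RS : RootSystemData V) (S : Set V)
    (y : V ≃ₗ[ℝ] V) (hy : y ∈ WeylGroup RS.roots)
    (hIy : inversionSet RS.pos y ⊆ S)
    (α : V) (hα : α ∈ inversionSet RS.pos y) :
    inversionSet RS.pos (y.trans (reflLin α)) ⊆ PetersonTranslate RS.pos S α := by
  rintro β ⟨hβ, hβy⟩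
  have hαR := RS.pos_subset hα.1
  have hα0 := ne_zero_of_mem_roots hαR
  have hP : RS.pos.Finite := RS.finite.subset RS.pos_subset
  obtain ⟨m, hm⟩ := RS.crystallographic α hαR β (RS.pos_subset hβ)
  rw [LinearEquiv.symm_trans_apply, reflLin_symm, reflLin_eq_sub_zsmul hα0 hm] at hβy
  obtain ⟨k, hδ, hδα⟩ := hP.exists_sub_zsmul_mem_sub_not_mem hα0 hβ
  set δ := β - (k : ℤ) • α
  set g := ((k : ℤ) - m).toNat
  have htop : δ + ((g + k : ℕ) : ℤ) • α ∈ RS.roots := by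
    convert add_toNat_sub_zsmul_mem_roots hαR (RS.pos_subset hβ) hm (RS.pos_subset hδ) using 1
    simp only [δ, g]
    push_cast
    module
  have hrun := add_zsmul_mem_pos_of_endpoints hα.1 hδ htop
  rw [show β = δ + (k : ℤ) • α by simp [δ]]
  refine add_zsmul_mem_petersonTranslate hP hα0 hδα hrun le_rfl fun j hgj hjk => hIy ?_
  have hj := hrun j (by positivity) (by omega)
  have e : δ + (j : ℤ) • α = (β - m • α) + (m - k + j) • α := by simp only [δ]; module
  rw [e] at hj ⊢
  exact add_zsmul_mem_inversionSet hy hα hβy (by omega) hj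

/-- If a coconvex set `S` contains the inversion set `I(y)` and `α ∈ I(y)`,
then `I(r_α y) ⊆ τ(S, α)`, where `r_α` is the reflection through `α`. -/
theorem inversionSet_reflection_subset_petersonTranslate
    (RS : RootSystemData V) (S : Set V) (hS : IsCoconvex RS.pos S)
    (y : V ≃ₗ[ℝ] V) (hy : y ∈ WeylGroup RS.roots)
    (hIy : inversionSet RS.pos y ⊆ S)
    (α : V) (hα : α ∈ inversionSet RS.pos y) :
    inversionSet RS.pos (y.trans (reflLin α)) ⊆ PetersonTranslate RS.pos S α :=
  inversionSet_reflection_subset_petersonTranslate_general RS S y hy hIy α hα
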